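/- arXiv:math/0601312 — 5 statements merged into one kernel-verified Lean document; each statement's English description precedes it below -/
import Mathlib

section
/- Let χ: L → M be a morphism of differential graded Lie algebras. The bilinear bracket on the suspended mapping cone C_χ defined by [(l₁,0),(l₂,0)] = ([l₁,l₂],0), [(0,m),(l,0)] = (0, ½[m,χ(l)]), and [(0,m₁),(0,m₂)] = 0 (extended by graded antisymmetry) satisfies the graded Leibniz rule with respect to the differential δ(l,m) = (dl, χ(l) − dm): δ[x,y] = [δx, y] + (−1)^{deg x}[x, δy]. -/
/-- A (ℤ-graded) differential graded Lie algebra over a field `K`,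
presented via an internally graded module: an ambient module `V`,
a grading by submodules, a degree‑1 differential and a bilinear bracket,
with the graded axioms imposed on homogeneous elements. -/
structure DGLA (K : Type) [Field K] where
  V : Type
  [acg : AddCommGroup V]
  [mod : Module K V]
  grading : ℤ → Submodule K V
  isInternal : DirectSum.IsInternal grading
  d : V →ₗ[K] V
  bracket : V →ₗ[K] V →ₗ[K] V
  d_mem : ∀ (i : ℤ) (v : V), v ∈ grading i → d v ∈ grading (i + 1)
  bracket_mem : ∀ (i j : ℤ) (v w : V), v ∈ grading i → w ∈ grading j →
    bracket v w ∈ grading (i + j)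
  d_sq : ∀ v, d (d v) = 0
  antisymm : ∀ (i j : ℤ) (v w : V), v ∈ grading i → w ∈ grading j →
    bracket v w = -(((-1 : K) ^ (i * j)) • bracket w v)
  jacobi : ∀ (i j : ℤ) (v w u : V), v ∈ grading i → w ∈ grading j →
    bracket v (bracket w u) =
      bracket (bracket v w) u + ((-1 : K) ^ (i * j)) • bracket w (bracket v u)
  leibniz : ∀ (i : ℤ) (v w : V), v ∈ grading i →
    d (bracket v w) = bracket (d v) w + ((-1 : K) ^ i) • bracket v (d w)

attribute [instance] DGLA.acg DGLA.mod

/-- A morphism of differential graded Lie algebras. -/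
structure DGLAHom {K : Type} [Field K] (L M : DGLA K) where
  toLin : L.V →ₗ[K] M.V
  map_grading : ∀ (i : ℤ) (v : L.V), v ∈ L.grading i → toLin v ∈ M.grading i
  map_d : ∀ v, toLin (L.d v) = M.d (toLin v)
  map_bracket : ∀ v w, toLin (L.bracket v w) = M.bracket (toLin v) (toLin w)

/-- the naive bracket on the suspended mapping cone `C_χ`,
given on homogeneous elements `x = (l₁,m₁)` of degree `i` and `y = (l₂,m₂)` of
degree `j` by `[x,y] = ([l₁,l₂], ½[m₁,χ(l₂)] + (−1)^i·½[χ(l₁),m₂])`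
(the extension by graded antisymmetry of `[l₁,l₂]`, `[m,l] = ½[m,χ(l)]`,
`[m₁,m₂] = 0`), satisfies the graded Leibniz rule with respect to the
differential `δ(l,m) = (dl, χ(l) − dm)`:
`δ[x,y] = [δx,y] + (−1)^{deg x}[x,δy]`. -/
theorem cone_bracket_leibniz
    (K : Type) [Field K] [CharZero K] (L M : DGLA K) (χ : DGLAHom L M)
    (δ : L.V × M.V → L.V × M.V)
    (hδ : ∀ p, δ p = (L.d p.1, χ.toLin p.1 - M.d p.2))
    (B : ℤ → L.V × M.V → L.V × M.V → L.V × M.V)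
    (hB : ∀ (i : ℤ) x y, B i x y =
      (L.bracket x.1 y.1,
        (2⁻¹ : K) • M.bracket x.2 (χ.toLin y.1) +
          ((-1 : K) ^ i * 2⁻¹) • M.bracket (χ.toLin x.1) y.2)) :
    ∀ (i j : ℤ) (x y : L.V × M.V),
      x.1 ∈ L.grading i → x.2 ∈ M.grading (i - 1) →
      y.1 ∈ L.grading j → y.2 ∈ M.grading (j - 1) →
      δ (B i x y) = B (i + 1) (δ x) y + ((-1 : K) ^ i) • B i x (δ y) := by
  intro i j x y hx1 hx2 hy1 hy2
  obtain ⟨l₁, m₁⟩ := x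
  obtain ⟨l₂, m₂⟩ := y
  simp only at hx1 hx2 hy1 hy2
  have hε : ((-1 : K) ^ i) * ((-1 : K) ^ i) = 1 := by
    rw [← mul_zpow]; norm_num
  have hε1 : ((-1 : K) ^ (i - 1)) = -((-1 : K) ^ i) := by
    rw [zpow_sub₀ (by norm_num : (-1 : K) ≠ 0)]
    field_simp
  have hε2 : ((-1 : K) ^ (i + 1)) = -((-1 : K) ^ i) := by
    rw [zpow_add₀ (by norm_num : (-1 : K) ≠ 0)]; norm_num
  have h1 := M.leibniz (i - 1) m₁ (χ.toLin l₂) hx2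
  have h2 := M.leibniz i (χ.toLin l₁) m₂ (χ.map_grading i l₁ hx1)
  have h3 := χ.map_bracket l₁ l₂
  have hd1 := χ.map_d l₁
  have hd2 := χ.map_d l₂
  have hL := L.leibniz i l₁ l₂ hx1
  simp only [hδ, hB, Prod.mk.injEq, Prod.smul_mk, Prod.mk_add_mk]
  constructor
  · exact hL
  · simp only [map_add, map_smul, map_sub, LinearMap.sub_apply, LinearMap.add_apply,
      LinearMap.smul_apply, h1, h2, h3, hd1, hd2, hε1, hε2]
    match_scalars <;>
      first
        | ring1
        | linear_combination hε
        | linear_combination -hε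
        | linear_combination (2⁻¹ : K) * hε
        | linear_combination (-(2⁻¹ : K)) * hε
end

section
/- Define polynomials φ_n(t) ∈ ℚ[t] and rational numbers I_n recursively by φ₁(t) = t, I_n = ∫₀¹ φ_n(t) dt, and φ_{n+1}(t) = ∫₀ᵗ φ_n(s) ds − t·I_n. Then for every n ≥ 1, I_n = −B_n/n!, where B_n is the n-th Bernoulli number defined by x/(e^x − 1) = Σ_{n≥0} B_n x^n/n!. -/
open Polynomial

/-- The formal antiderivative of a rational polynomial vanishing at `0`:
`∫₀ᵗ`, sending `tⁿ` to `tⁿ⁺¹/(n+1)`. -/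
noncomputable def polyInt (p : Polynomial ℚ) : Polynomial ℚ :=
  p.sum fun n a => Polynomial.C (a / (n + 1)) * Polynomial.X ^ (n + 1)

/-- The recursively defined polynomials `φ₁(t) = t`,
`φ_{n+1}(t) = ∫₀ᵗ φ_n(s) ds − t·I_n` where `I_n = ∫₀¹ φ_n(t) dt`. -/
noncomputable def phiPoly : ℕ → Polynomial ℚ
  | 0 => 0
  | 1 => Polynomial.X
  | (n + 2) =>
      polyInt (phiPoly (n + 1)) -
        Polynomial.C ((polyInt (phiPoly (n + 1))).eval 1) * Polynomial.X

/-- `I_n = ∫₀¹ φ_n(t) dt`. -/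
noncomputable def Ival (n : ℕ) : ℚ := (polyInt (phiPoly n)).eval 1

lemma derivative_polyInt (p : Polynomial ℚ) : derivative (polyInt p) = p := by
  rw [polyInt, Polynomial.sum, map_sum]
  conv_rhs => rw [p.as_sum_support]
  refine Finset.sum_congr rfl fun n hn => ?_
  rw [derivative_C_mul, derivative_X_pow]
  rw [← Polynomial.C_mul_X_pow_eq_monomial]
  push_cast
  rw [← mul_assoc, ← C_mul]
  congr 2
  have : (n : ℚ) + 1 ≠ 0 := by positivity
  field_simp

lemma polyInt_coeff_zero (p : Polynomial ℚ) : (polyInt p).coeff 0 = 0 := by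
  rw [polyInt, Polynomial.sum, finset_sum_coeff]
  refine Finset.sum_eq_zero fun n _ => ?_
  simp [coeff_C_mul, coeff_X_pow]

lemma polyInt_eq {p q : Polynomial ℚ} (hd : derivative q = p) (h0 : q.coeff 0 = 0) :
    polyInt p = q := by
  have h : derivative (polyInt p - q) = 0 := by
    rw [map_sub, derivative_polyInt, hd, sub_self]
  have hdeg := Polynomial.natDegree_eq_zero_of_derivative_eq_zero h
  have := Polynomial.eq_C_of_natDegree_eq_zero hdeg
  have hc : (polyInt p - q).coeff 0 = 0 := by
    rw [Polynomial.coeff_sub, polyInt_coeff_zero, h0, sub_self]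
  rw [hc, map_zero] at this
  exact sub_eq_zero.mp this

/-- `φ_n` in closed form: `(B_n(t) − B_n)/n!`. -/
noncomputable def Bpoly (n : ℕ) : Polynomial ℚ :=
  C ((n.factorial : ℚ))⁻¹ * (Polynomial.bernoulli n - C (_root_.bernoulli n))

lemma polyInt_Bpoly (n : ℕ) :
    polyInt (Bpoly n) = Bpoly (n + 1) - C (_root_.bernoulli n / n.factorial) * X := by
  apply polyInt_eq
  · rw [map_sub, Bpoly, derivative_C_mul, map_sub, derivative_C,
      Polynomial.derivative_bernoulli_add_one, derivative_C_mul, derivative_X, mul_one, sub_zero]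
    have hfac : ((n + 1).factorial : ℚ)⁻¹ * ((n : ℚ) + 1) = ((n.factorial : ℚ))⁻¹ := by
      rw [Nat.factorial_succ]
      push_cast
      have h1 : ((n : ℚ) + 1) ≠ 0 := by positivity
      have h2 : (n.factorial : ℚ) ≠ 0 := by positivity
      field_simp
    have hcast : ((n : ℚ[X]) + 1) = C ((n : ℚ) + 1) := by simp
    rw [hcast, ← mul_assoc, ← C_mul, hfac, Bpoly, mul_sub, ← C_mul,
      mul_comm ((n.factorial : ℚ))⁻¹, ← div_eq_mul_inv]
  · rw [Polynomial.coeff_sub, coeff_C_mul, Polynomial.coeff_X_zero, mul_zero, Bpoly,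
      coeff_C_mul, Polynomial.coeff_sub, Polynomial.coeff_C,
      Polynomial.coeff_zero_eq_eval_zero, Polynomial.bernoulli_eval_zero]
    simp

lemma eval_one_polyInt_Bpoly (n : ℕ) (hn : 1 ≤ n) :
    (polyInt (Bpoly n)).eval 1 = - _root_.bernoulli n / n.factorial := by
  rw [polyInt_Bpoly, Polynomial.eval_sub, Polynomial.eval_mul, eval_C, eval_X, mul_one, Bpoly,
    Polynomial.eval_mul, eval_C, Polynomial.eval_sub, Polynomial.bernoulli_eval_one, eval_C,
    bernoulli_eq_bernoulli'_of_ne_one (show n + 1 ≠ 1 by omega), sub_self, mul_zero, zero_sub,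
    neg_div]

lemma phi_eq : ∀ n : ℕ, phiPoly (n + 1) = Bpoly (n + 1) := by
  intro n
  induction n with
  | zero =>
    show Polynomial.X = Bpoly 1
    rw [Bpoly]
    simp [Polynomial.bernoulli, Finset.sum_range_succ]
    exact (Polynomial.monomial_one_one_eq_X).symm
  | succ n ih =>
    show polyInt (phiPoly (n + 1)) - C ((polyInt (phiPoly (n + 1))).eval 1) * X = Bpoly (n + 2)
    rw [ih, eval_one_polyInt_Bpoly (n + 1) (by omega), polyInt_Bpoly, neg_div, map_neg, neg_mul,
      sub_neg_eq_add, sub_add_cancel]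

/-- for every `n ≥ 1`, `I_n = −B_n/n!`, where `B_n` is the `n`-th
Bernoulli number (with the convention `x/(eˣ−1) = Σ B_n xⁿ/n!`, i.e. Mathlib's
`bernoulli`). -/
theorem Ival_eq_neg_bernoulli_div_factorial :
    ∀ n : ℕ, 1 ≤ n → Ival n = - _root_.bernoulli n / (Nat.factorial n : ℚ) := by
  intro n hn
  obtain ⟨m, rfl⟩ := Nat.exists_eq_add_of_le hn
  rw [Ival, add_comm, phi_eq, eval_one_polyInt_Bpoly _ (by omega)]
end

section
/- Let χ: L → M be a DGLA morphism, and define H_χ = {(l, m) ∈ L × M[t,dt] : e₀(m) = 0, e₁(m) = χ(l)}, a DGLA with componentwise operations. Then the map ι: C_χ → H_χ, ι(l,m) = (l, t·χ(l) + dt·m), is an injective quasi-isomorphism of cochain complexes, where C_χ carries the differential δ(l,m) = (dl, χ(l) − dm) and H_χ the induced differential. -/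
section PolyTdt

variable {K : Type} [Field K] {W : Type} [AddCommGroup W] [Module K W]

/-- Evaluation at `a` of a polynomial with coefficients in a module,
modelled as a finitely supported function `ℕ →₀ W`. -/
noncomputable def evalP (a : K) : (ℕ →₀ W) →ₗ[K] W :=
  Finsupp.lsum K fun n => (a ^ n) • (LinearMap.id : W →ₗ[K] W)

/-- Formal `t`-derivative of a polynomial with module coefficients. -/
noncomputable def derivP (p : ℕ →₀ W) : ℕ →₀ W :=
  p.sum fun n x => Finsupp.single (n - 1) (n • x)

/-- Formal antiderivative `∫₀ᵗ` of a polynomial with module coefficients. -/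
noncomputable def intP (p : ℕ →₀ W) : ℕ →₀ W :=
  p.sum fun n x => Finsupp.single (n + 1) (((n : K) + 1)⁻¹ • x)

/-- Convolution product of module-valued polynomials along a bilinear map. -/
noncomputable def convP (br : W →ₗ[K] W →ₗ[K] W) (p q : ℕ →₀ W) : ℕ →₀ W :=
  p.sum fun n x => q.sum fun m y => Finsupp.single (n + m) (br x y)

/-- Polynomials all of whose coefficients lie in a given submodule. -/
def coeffIn (S : Submodule K W) : Submodule K (ℕ →₀ W) where
  carrier := {p | ∀ n, p n ∈ S}
  add_mem' := by intro a b ha hb n; simpa using S.add_mem (ha n) (hb n)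
  zero_mem' := by intro n; simp
  smul_mem' := by intro c p hp n; simpa using S.smul_mem c (hp n)

end PolyTdt

variable {K : Type} [Field K]

/-- The de Rham algebra model `M[t,dt] = M ⊗ K[t,dt]`: an element of `M[t,dt]`
is a pair `(p,q)` representing `p(t) + q(t)dt`, with coefficients in `M`. -/
abbrev Tdt (M : DGLA K) : Type := (ℕ →₀ M.V) × (ℕ →₀ M.V)

/-- Degree-`i` part of `M[t,dt]`: `p` has coefficients in `M^i` and `q` in `M^{i-1}`. -/
noncomputable def gradingTdt (M : DGLA K) (i : ℤ) : Submodule K (Tdt M) :=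
  (coeffIn (M.grading i)).prod (coeffIn (M.grading (i - 1)))

/-- The differential of `M[t,dt]`: `d(p + q·dt) = (d_M p) + (p' − d_M q)·dt`. -/
noncomputable def dTdt (M : DGLA K) (x : Tdt M) : Tdt M :=
  (Finsupp.mapRange.linearMap M.d x.1,
    derivP x.1 - Finsupp.mapRange.linearMap M.d x.2)

/-- The Lie bracket of `M[t,dt] = M ⊗ K[t,dt]`, with Koszul sign encoded by a
parity operator `P` (`P v = (−1)^i v` for `v ∈ M^i`):
`[p₁ + q₁dt, p₂ + q₂dt] = [p₁,p₂] + ([p₁,q₂] + [q₁, P p₂])·dt`. -/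
noncomputable def bracketTdt (M : DGLA K) (P : M.V →ₗ[K] M.V) (x y : Tdt M) : Tdt M :=
  (convP M.bracket x.1 y.1,
    convP M.bracket x.1 y.2 + convP M.bracket x.2 (Finsupp.mapRange.linearMap P y.1))

/-- Evaluation `e_a : M[t,dt] → M`, `e_a(Σ mᵢtⁱ + nᵢtⁱdt) = Σ mᵢaⁱ`. -/
noncomputable def evalTdt (M : DGLA K) (a : K) (x : Tdt M) : M.V := evalP a x.1

/-- Elementwise quasi-isomorphism between internally graded complexes. -/
def IsQuasiIso {A B : Type}
    [AddCommGroup A] [Module K A] [AddCommGroup B] [Module K B]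
    (gA : ℤ → Submodule K A) (dA : A → A)
    (gB : ℤ → Submodule K B) (dB : B → B) (f : A → B) : Prop :=
  ∀ i : ℤ,
    (∀ w ∈ gB i, dB w = 0 →
      ∃ v ∈ gA i, dA v = 0 ∧ ∃ u ∈ gB (i - 1), f v = w + dB u) ∧
    (∀ v ∈ gA i, dA v = 0 → (∃ u ∈ gB (i - 1), f v = dB u) →
      ∃ z ∈ gA (i - 1), dA z = v)

/-- The membership conditions defining `H_χ ⊆ L × M[t,dt]`:
`e₀(m) = 0` and `e₁(m) = χ(l)`. -/
def Hmem {L M : DGLA K} (χ : DGLAHom L M) (x : L.V × Tdt M) : Prop :=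
  evalTdt M 0 x.2 = 0 ∧ evalTdt M 1 x.2 = χ.toLin x.1

/-- `H_χ` as a submodule of `L × M[t,dt]`. -/
noncomputable def Hsub {L M : DGLA K} (χ : DGLAHom L M) :
    Submodule K (L.V × Tdt M) :=
  LinearMap.ker
    (LinearMap.prod
      ((evalP (0 : K)) ∘ₗ (LinearMap.fst K (ℕ →₀ M.V) (ℕ →₀ M.V)) ∘ₗ
        (LinearMap.snd K L.V (Tdt M)))
      ((evalP (1 : K)) ∘ₗ (LinearMap.fst K (ℕ →₀ M.V) (ℕ →₀ M.V)) ∘ₗ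
          (LinearMap.snd K L.V (Tdt M)) -
        χ.toLin ∘ₗ (LinearMap.fst K L.V (Tdt M))))

/-- The inclusion `ι : C_χ → H_χ`, `ι(l,m) = (l, tχ(l) + dt·m)`. -/
noncomputable def iotaMap {L M : DGLA K} (χ : DGLAHom L M)
    (x : L.V × M.V) : L.V × Tdt M :=
  (x.1, (Finsupp.single 1 (χ.toLin x.1), Finsupp.single 0 x.2))

namespace IotaAux
open Finsupp
variable {W W' : Type} [AddCommGroup W] [Module K W]
  [AddCommGroup W'] [Module K W']

noncomputable def derivL : (ℕ →₀ W) →ₗ[K] (ℕ →₀ W) :=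
  Finsupp.lsum K fun n => (n : K) • Finsupp.lsingle (n - 1)

noncomputable def intL : (ℕ →₀ W) →ₗ[K] (ℕ →₀ W) :=
  Finsupp.lsum K fun n => ((n : K) + 1)⁻¹ • Finsupp.lsingle (n + 1)

lemma derivP_eq (p : ℕ →₀ W) : derivP p = derivL (K := K) p := by
  rw [derivP, derivL, Finsupp.lsum_apply]
  refine Finsupp.sum_congr fun n _ => ?_
  simp [Finsupp.smul_single, Nat.cast_smul_eq_nsmul]

lemma intP_eq (p : ℕ →₀ W) : intP (K := K) p = intL (K := K) p := by
  rw [intP, intL, Finsupp.lsum_apply]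
  refine Finsupp.sum_congr fun n _ => ?_
  simp [Finsupp.smul_single]

lemma derivL_single (n : ℕ) (x : W) :
    derivL (K := K) (single n x) = single (n - 1) ((n : K) • x) := by
  simp [derivL, Finsupp.smul_single]

lemma intL_single (n : ℕ) (x : W) :
    intL (K := K) (single n x) = single (n + 1) (((n : K) + 1)⁻¹ • x) := by
  simp [intL, Finsupp.smul_single]

lemma evalP_single (a : K) (n : ℕ) (x : W) :
    evalP a (single n x) = a ^ n • x := by simp [evalP]

lemma evalP_zero_eq (p : ℕ →₀ W) : evalP (0 : K) p = p 0 := by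
  induction p using Finsupp.induction_linear with
  | zero => simp
  | add f g hf hg => simp [map_add, hf, hg]
  | single n x =>
    rw [evalP_single]
    cases n with
    | zero => simp
    | succ k => simp [Finsupp.single_apply]

lemma evalP_mapRange (a : K) (f : W →ₗ[K] W') (p : ℕ →₀ W) :
    evalP a (Finsupp.mapRange.linearMap f p) = f (evalP a p) := by
  induction p using Finsupp.induction_linear with
  | zero => simp
  | add u v hu hv => rw [map_add, map_add, hu, hv]; rw [(evalP a).map_add, map_add]
  | single n x => simp [evalP_single, map_smul]

lemma mapRange_intL (f : W →ₗ[K] W') (p : ℕ →₀ W) :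
    Finsupp.mapRange.linearMap f (intL (K := K) p) = intL (K := K) (Finsupp.mapRange.linearMap f p) := by
  induction p using Finsupp.induction_linear with
  | zero => simp
  | add u v hu hv => simp [map_add, hu, hv]
  | single n x => simp [intL_single, map_smul]

lemma mapRange_derivL (f : W →ₗ[K] W') (p : ℕ →₀ W) :
    Finsupp.mapRange.linearMap f (derivL (K := K) p) = derivL (K := K) (Finsupp.mapRange.linearMap f p) := by
  induction p using Finsupp.induction_linear with
  | zero => simp
  | add u v hu hv => simp [map_add, hu, hv]
  | single n x => simp [derivL_single, map_smul]

lemma intL_derivL [CharZero K] (p : ℕ →₀ W) :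
    intL (K := K) (derivL (K := K) p) = p - single 0 (p 0) := by
  induction p using Finsupp.induction_linear with
  | zero => simp
  | add u v hu hv =>
    simp only [map_add, hu, hv, Finsupp.add_apply, Finsupp.single_add]
    abel
  | single n x =>
    rw [derivL_single, intL_single]
    cases n with
    | zero => simp
    | succ k =>
      rw [Finsupp.single_apply]
      simp only [Nat.succ_sub_one, smul_smul]
      push_cast
      rw [inv_mul_cancel₀ (Nat.cast_add_one_ne_zero k), one_smul]
      simp

lemma derivL_intL [CharZero K] (p : ℕ →₀ W) :
    derivL (K := K) (intL (K := K) p) = p := by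
  induction p using Finsupp.induction_linear with
  | zero => simp
  | add u v hu hv => simp [map_add, hu, hv]
  | single n x =>
    rw [intL_single, derivL_single]
    simp only [Nat.add_sub_cancel, smul_smul]
    push_cast
    rw [mul_inv_cancel₀ (Nat.cast_add_one_ne_zero n), one_smul]

lemma intL_apply_zero (p : ℕ →₀ W) : intL (K := K) p 0 = 0 := by
  induction p using Finsupp.induction_linear with
  | zero => simp
  | add u v hu hv => simp [map_add, hu, hv]
  | single n x => simp [intL_single, Finsupp.single_apply]

variable {S : Submodule K W} {S' : Submodule K W'}

lemma mem_coeffIn {p : ℕ →₀ W} : p ∈ coeffIn S ↔ ∀ n, p n ∈ S := Iff.rfl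

lemma single_mem_coeffIn {x : W} (h : x ∈ S) (n : ℕ) : single n x ∈ coeffIn S := by
  intro k
  rw [Finsupp.single_apply]
  split <;> simp [h]

lemma evalP_mem_coeffIn {p : ℕ →₀ W} (hp : p ∈ coeffIn S) (a : K) : evalP a p ∈ S := by
  rw [evalP, Finsupp.lsum_apply, Finsupp.sum]
  exact Submodule.sum_mem _ fun n _ => by simpa using S.smul_mem (a ^ n) (hp n)

lemma intL_mem_coeffIn {p : ℕ →₀ W} (hp : p ∈ coeffIn S) : intL (K := K) p ∈ coeffIn S := by
  intro k
  rw [intL, Finsupp.lsum_apply, Finsupp.sum_apply, Finsupp.sum]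
  refine Submodule.sum_mem _ fun n _ => ?_
  simp only [LinearMap.smul_apply, Finsupp.lsingle_apply, Finsupp.smul_single,
    Finsupp.single_apply]
  split
  · exact S.smul_mem _ (hp n)
  · exact S.zero_mem

lemma mapRange_mem_coeffIn {f : W →ₗ[K] W'} (hf : ∀ x ∈ S, f x ∈ S') {p : ℕ →₀ W}
    (hp : p ∈ coeffIn S) : Finsupp.mapRange.linearMap f p ∈ coeffIn S' := by
  intro k
  simpa using hf _ (hp k)

lemma mem_Hsub {L M : DGLA K} (χ : DGLAHom L M) (x : L.V × Tdt M) :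
    x ∈ Hsub χ ↔ evalP (0 : K) x.2.1 = 0 ∧ evalP (1 : K) x.2.1 = χ.toLin x.1 := by
  simp only [Hsub, LinearMap.mem_ker, LinearMap.prod_apply, Function.prod, LinearMap.coe_comp,
    Function.comp_apply, LinearMap.sub_apply, LinearMap.fst_apply, LinearMap.snd_apply,
    Prod.mk_eq_zero, sub_eq_zero]

end IotaAux

/-- `ι : C_χ → H_χ`, `ι(l,m) = (l, tχ(l) + dt·m)`, is an injective
quasi-isomorphism of cochain complexes, where `C_χ` carries the differential
`δ(l,m) = (dl, χ(l) − dm)` and `H_χ ⊆ L × M[t,dt]` the induced differential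
`(l,m) ↦ (dl, dm)`. -/
theorem iota_injective_quasiIso
    (K : Type) [Field K] [CharZero K] (L M : DGLA K) (χ : DGLAHom L M) :
    Function.Injective (iotaMap χ) ∧
    (∀ x : L.V × M.V, iotaMap χ x ∈ Hsub χ) ∧
    (∀ (i : ℤ) (x : L.V × M.V), x.1 ∈ L.grading i → x.2 ∈ M.grading (i - 1) →
      iotaMap χ x ∈ (L.grading i).prod (gradingTdt M i)) ∧
    (∀ x : L.V × M.V,
      iotaMap χ (L.d x.1, χ.toLin x.1 - M.d x.2) =
        (L.d (iotaMap χ x).1, dTdt M (iotaMap χ x).2)) ∧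
    IsQuasiIso
      (fun i => (L.grading i).prod (M.grading (i - 1)))
      (fun p => (L.d p.1, χ.toLin p.1 - M.d p.2) : L.V × M.V → L.V × M.V)
      (fun i => ((L.grading i).prod (gradingTdt M i)) ⊓ Hsub χ)
      (fun x => (L.d x.1, dTdt M x.2))
      (iotaMap χ) := by
  classical
  open Finsupp IotaAux in
  refine ⟨?_, ?_, ?_, ?_, ?_⟩
  · -- injectivity
    intro a b h
    have h1 := congrArg Prod.fst h
    have h2 := congrArg (fun z : L.V × Tdt M => z.2.2 0) h
    simp only [iotaMap, Finsupp.single_eq_same] at h1 h2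
    exact Prod.ext h1 h2
  · -- lands in Hsub
    intro x
    rw [mem_Hsub]
    constructor
    · rw [show (iotaMap χ x).2.1 = Finsupp.single 1 (χ.toLin x.1) from rfl, evalP_single]
      simp
    · rw [show (iotaMap χ x).2.1 = Finsupp.single 1 (χ.toLin x.1) from rfl, evalP_single]
      simp [iotaMap]
  · -- grading
    intro i x h1 h2
    refine Submodule.mem_prod.mpr ⟨h1, Submodule.mem_prod.mpr ⟨?_, ?_⟩⟩
    · exact single_mem_coeffIn (χ.map_grading i _ h1) 1
    · exact single_mem_coeffIn h2 0
  · -- chain map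
    intro x
    have hmr : ∀ (n : ℕ) (y : M.V),
        Finsupp.mapRange.linearMap M.d (Finsupp.single n y) = Finsupp.single n (M.d y) := by
      intro n y; simp
    refine Prod.ext rfl (Prod.ext ?_ ?_)
    · show Finsupp.single 1 (χ.toLin (L.d x.1))
          = Finsupp.mapRange.linearMap M.d (Finsupp.single 1 (χ.toLin x.1))
      rw [hmr, χ.map_d]
    · show Finsupp.single 0 (χ.toLin x.1 - M.d x.2)
          = derivP (Finsupp.single 1 (χ.toLin x.1))
            - Finsupp.mapRange.linearMap M.d (Finsupp.single 0 x.2)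
      rw [derivP_eq (K := K), derivL_single, hmr, Finsupp.single_sub]
      norm_num
  · -- quasi-isomorphism
    intro i
    constructor
    · rintro ⟨l, p, q⟩ hw hclosed
      obtain ⟨hwprod, hwH⟩ := Submodule.mem_inf.mp hw
      obtain ⟨hl, hpq⟩ := Submodule.mem_prod.mp hwprod
      simp only [gradingTdt] at hpq
      obtain ⟨hp, hq⟩ := Submodule.mem_prod.mp hpq
      obtain ⟨he0, he1⟩ := (mem_Hsub χ _).mp hwH
      dsimp only at hl hp hq he0 he1
      have hp0 : p 0 = 0 := by rw [← evalP_zero_eq (K := K)]; exact he0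
      simp only [Prod.ext_iff, dTdt, Prod.mk_eq_zero, Prod.fst_zero, Prod.snd_zero]
        at hclosed
      obtain ⟨hdl, hdp, hdq'⟩ := hclosed
      have hdq : Finsupp.mapRange.linearMap M.d q = derivL (K := K) p := by
        have h := sub_eq_zero.mp hdq'
        rw [← h, derivP_eq (K := K)]
      set m : M.V := evalP (1 : K) (intL (K := K) q) with hm_def
      have hm : m ∈ M.grading (i - 1) := evalP_mem_coeffIn (intL_mem_coeffIn hq) 1
      have key : M.d m = χ.toLin l := by
        rw [hm_def, ← evalP_mapRange, mapRange_intL, hdq, intL_derivL, map_sub,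
          evalP_single, he1, hp0]
        simp
      refine ⟨(l, m), Submodule.mem_prod.mpr ⟨hl, hm⟩, ?_,
        ((0 : L.V), (Finsupp.single 1 m - intL (K := K) q, 0)), ?_, ?_⟩
      · show (L.d l, χ.toLin l - M.d m) = 0
        rw [key, hdl, sub_self]
        rfl
      · refine Submodule.mem_inf.mpr ⟨Submodule.mem_prod.mpr ⟨Submodule.zero_mem _, ?_⟩, ?_⟩
        · refine Submodule.mem_prod.mpr ⟨?_, Submodule.zero_mem _⟩
          exact Submodule.sub_mem _ (single_mem_coeffIn hm 1) (intL_mem_coeffIn hq)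
        · rw [mem_Hsub]
          constructor
          · show evalP (0 : K) (Finsupp.single 1 m - intL (K := K) q) = 0
            rw [map_sub, evalP_single, evalP_zero_eq, intL_apply_zero]
            simp
          · show evalP (1 : K) (Finsupp.single 1 m - intL (K := K) q) = χ.toLin 0
            rw [map_sub, evalP_single, map_zero, ← hm_def]
            simp
      · show iotaMap χ (l, m)
            = (l, (p, q)) + (L.d 0, dTdt M (Finsupp.single 1 m - intL (K := K) q, 0))
        have c1 : Finsupp.mapRange.linearMap M.d (Finsupp.single 1 m - intL (K := K) q)
            = Finsupp.single 1 (χ.toLin l) - p := by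
          have hs : Finsupp.mapRange.linearMap M.d (Finsupp.single 1 m)
              = Finsupp.single 1 (M.d m) := by simp
          rw [map_sub, mapRange_intL, hdq, intL_derivL, hp0, hs, key]
          simp
        have c2 : derivP (Finsupp.single 1 m - intL (K := K) q)
            = Finsupp.single 0 m - q := by
          rw [derivP_eq (K := K), map_sub, derivL_single, derivL_intL]
          norm_num
        simp only [iotaMap, dTdt, map_zero, c1, c2, Prod.mk_add_mk, Prod.mk.injEq]
        refine ⟨by rw [add_zero], ?_, ?_⟩
        · abel
        · rw [sub_zero]; abel
    · rintro ⟨l, m⟩ hv hcl ⟨⟨l', h₁, h₂⟩, hu, hequ⟩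
      obtain ⟨huprod, huH⟩ := Submodule.mem_inf.mp hu
      obtain ⟨hl', hpq'⟩ := Submodule.mem_prod.mp huprod
      simp only [gradingTdt] at hpq'
      obtain ⟨hh1, hh2⟩ := Submodule.mem_prod.mp hpq'
      obtain ⟨hu0, hu1⟩ := (mem_Hsub χ _).mp huH
      dsimp only at hl' hh1 hh2 hu0 hu1
      have h10 : h₁ 0 = 0 := by rw [← evalP_zero_eq (K := K)]; exact hu0
      simp only [iotaMap, dTdt, Prod.ext_iff] at hequ
      obtain ⟨e1, _, e3⟩ := hequ
      refine ⟨(l', evalP (1 : K) (intL (K := K) h₂)),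
        Submodule.mem_prod.mpr ⟨hl', evalP_mem_coeffIn (intL_mem_coeffIn hh2) 1⟩, ?_⟩
      show (L.d l', χ.toLin l' - M.d (evalP (1 : K) (intL (K := K) h₂))) = (l, m)
      refine Prod.ext e1.symm ?_
      have lhs : evalP (1 : K) (intL (K := K) (Finsupp.single 0 m)) = m := by
        rw [intL_single, evalP_single]
        norm_num
      have rhs : evalP (1 : K)
          (intL (K := K) (derivP h₁ - Finsupp.mapRange.linearMap M.d h₂))
          = χ.toLin l' - M.d (evalP (1 : K) (intL (K := K) h₂)) := by
        rw [map_sub, derivP_eq (K := K), intL_derivL, ← mapRange_intL, map_sub, map_sub,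
          evalP_single, h10, evalP_mapRange, hu1]
        simp
      have hkey := congrArg (fun r => evalP (1 : K) (intL (K := K) r)) e3
      rw [lhs, rhs] at hkey
      show χ.toLin l' - M.d (evalP (1 : K) (intL (K := K) h₂)) = m
      exact hkey.symm
end

section
/- Let χ: L → M be a DGLA morphism, C_χ[1] its shifted suspended mapping cone with suspended differential q₁^C(l,m) = (−dl, −χ(l) + dm), and H_χ[1] the shift of H_χ with suspended differential q₁(l,m) = (−dl, −dm). Define ι(l,m) = (l, tχ(l) + dt·m), π(l, m(t,dt)) = (l, ∫₀¹ m(t,dt)), and K(l,m) = (0, ∫₀ᵗ m − t∫₀¹ m). Then π is a morphism of complexes, π∘ι = Id on C_χ[1], and ι∘π = Id + K∘q₁ + q₁∘K on H_χ[1]. -/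
variable {K : Type} [Field K]

section Aux
variable {K : Type} [Field K] {W : Type} [AddCommGroup W] [Module K W]

noncomputable def intL : (ℕ →₀ W) →ₗ[K] (ℕ →₀ W) :=
  Finsupp.lsum K fun n => (Finsupp.lsingle (n+1)).comp ((((n:K)+1)⁻¹) • LinearMap.id)

noncomputable def derivL : (ℕ →₀ W) →ₗ[K] (ℕ →₀ W) :=
  Finsupp.lsum K fun n => (Finsupp.lsingle (n-1)).comp ((n : ℕ) • (LinearMap.id : W →ₗ[K] W))

lemma intP_eq (p : ℕ →₀ W) : intP (K := K) p = intL (K := K) p := rfl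

lemma derivP_eq (p : ℕ →₀ W) : derivP p = derivL (K := K) p := rfl

lemma evalP_single (a : K) (n : ℕ) (x : W) : evalP a (Finsupp.single n x) = a^n • x := by
  simp [evalP]

lemma intL_single (n : ℕ) (x : W) :
    intL (K := K) (Finsupp.single n x) = Finsupp.single (n+1) ((((n:K)+1)⁻¹) • x) := by
  simp [intL]

lemma derivL_single (n : ℕ) (x : W) :
    derivL (K := K) (Finsupp.single n x) = Finsupp.single (n-1) (n • x) := by
  simp [derivL]

end Aux

section Aux2
variable {K : Type} [Field K] [CharZero K] {W : Type} [AddCommGroup W] [Module K W]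

lemma castsucc_ne (n : ℕ) : ((n : K) + 1) ≠ 0 := by
  exact_mod_cast Nat.cast_add_one_ne_zero (R := K) n

lemma deriv_intL (p : ℕ →₀ W) : derivL (K := K) (intL (K := K) p) = p := by
  have h : (derivL.comp intL : (ℕ →₀ W) →ₗ[K] (ℕ →₀ W)) = LinearMap.id := by
    apply Finsupp.lhom_ext
    intro n x
    rw [LinearMap.comp_apply, intL_single, derivL_single]
    rw [← Nat.cast_smul_eq_nsmul K, smul_smul]
    push_cast
    rw [mul_inv_cancel₀ (castsucc_ne n), one_smul]
    simp
  exact congrArg (fun f => f p) h ▸ DFunLike.congr_fun h p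

lemma int_derivL (p : ℕ →₀ W) :
    intL (K := K) (derivL (K := K) p) = p - Finsupp.single 0 (p 0) := by
  have h : (intL.comp derivL : (ℕ →₀ W) →ₗ[K] (ℕ →₀ W)) =
      LinearMap.id - (Finsupp.lsingle 0).comp (Finsupp.lapply 0) := by
    apply Finsupp.lhom_ext
    intro n x
    rw [LinearMap.comp_apply, derivL_single, intL_single]
    cases n with
    | zero => simp
    | succ m =>
      simp only [Nat.succ_sub_one]
      rw [← Nat.cast_smul_eq_nsmul K, smul_smul]
      push_cast
      rw [inv_mul_cancel₀ (castsucc_ne m), one_smul]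
      simp [Finsupp.single_apply]
  have := DFunLike.congr_fun h p
  simpa using this

lemma eval_zeroP (p : ℕ →₀ W) : evalP (0 : K) p = p 0 := by
  have h : (evalP (0 : K) : (ℕ →₀ W) →ₗ[K] W) = Finsupp.lapply 0 := by
    apply Finsupp.lhom_ext
    intro n x
    rw [evalP_single]
    cases n with
    | zero => simp
    | succ m => simp [Finsupp.single_apply]
  exact DFunLike.congr_fun h p

lemma mapRange_intL (f : W →ₗ[K] W) (p : ℕ →₀ W) :
    Finsupp.mapRange.linearMap f (intL (K := K) p) =
      intL (K := K) (Finsupp.mapRange.linearMap f p) := by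
  have h : ((Finsupp.mapRange.linearMap f).comp intL : (ℕ →₀ W) →ₗ[K] (ℕ →₀ W)) =
      intL.comp (Finsupp.mapRange.linearMap f) := by
    apply Finsupp.lhom_ext
    intro n x
    simp [intL_single, map_smul]
  exact DFunLike.congr_fun h p

lemma evalP_mapRange (a : K) (f : W →ₗ[K] W) (p : ℕ →₀ W) :
    evalP a (Finsupp.mapRange.linearMap f p) = f (evalP a p) := by
  have h : ((evalP a).comp (Finsupp.mapRange.linearMap f) : (ℕ →₀ W) →ₗ[K] W) =
      f.comp (evalP a) := by
    apply Finsupp.lhom_ext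
    intro n x
    simp [evalP_single, map_smul]
  exact DFunLike.congr_fun h p

end Aux2
section Aux3
variable {K : Type} [Field K] {W : Type} [AddCommGroup W] [Module K W]
lemma mapRangeL_single (f : W →ₗ[K] W) (n : ℕ) (x : W) :
    Finsupp.mapRange.linearMap f (Finsupp.single n x) = Finsupp.single n (f x) := by
  simp
end Aux3

lemma mem_Hsub_iff {L M : DGLA K} (χ : DGLAHom L M) (x : L.V × Tdt M) (hx : x ∈ Hsub χ) :
    evalP (0 : K) x.2.1 = 0 ∧ evalP (1 : K) x.2.1 = χ.toLin x.1 := by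
  simp only [Hsub, LinearMap.mem_ker, LinearMap.prod_apply, Function.prod, LinearMap.coe_comp,
    Function.comp_apply, LinearMap.sub_apply, LinearMap.fst_apply, LinearMap.snd_apply,
    Prod.mk_eq_zero, sub_eq_zero] at hx
  exact hx


/-- with the suspended differentials
`q₁^C(l,m) = (−dl, −χ(l) + dm)` on `C_χ[1]` and `q₁(l,m) = (−dl, −dm)` on
`H_χ[1]`, the maps `π(l, m(t,dt)) = (l, ∫₀¹ m)` and
`K(l,m) = (0, ∫₀ᵗ m − t∫₀¹ m)` satisfy: `π` is a morphism of complexes,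
`π∘ι = Id` on `C_χ[1]`, and `ι∘π = Id + K∘q₁ + q₁∘K` on `H_χ[1]`. -/

theorem pi_iota_homotopy
    (K : Type) [Field K] [CharZero K] (L M : DGLA K) (χ : DGLAHom L M)
    (q1C : L.V × M.V → L.V × M.V)
    (hq1C : ∀ p, q1C p = (-(L.d p.1), -(χ.toLin p.1) + M.d p.2))
    (q1H : L.V × Tdt M → L.V × Tdt M)
    (hq1H : ∀ x, q1H x = (-(L.d x.1), -(dTdt M x.2)))
    (piMap : L.V × Tdt M → L.V × M.V)
    (hpi : ∀ x, piMap x = (x.1, evalP (1 : K) (intP (K := K) x.2.2)))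
    (Kop : L.V × Tdt M → L.V × Tdt M)
    (hK : ∀ x, Kop x =
      (0, (intP (K := K) x.2.2 - Finsupp.single 1 (evalP (1 : K) (intP (K := K) x.2.2)), 0))) :
    (∀ x ∈ Hsub χ, piMap (q1H x) = q1C (piMap x)) ∧
    (∀ y : L.V × M.V, piMap (iotaMap χ y) = y) ∧
    (∀ x ∈ Hsub χ, iotaMap χ (piMap x) = x + Kop (q1H x) + q1H (Kop x)) := by
  refine ⟨?_, ?_, ?_⟩
  · rintro ⟨l, p, q⟩ hx
    obtain ⟨h0, h1⟩ := mem_Hsub_iff χ _ hx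
    simp only at h0 h1
    have hp0 : p 0 = 0 := by rw [← eval_zeroP (K := K)]; exact h0
    rw [hq1H, hpi, hpi, hq1C]
    refine Prod.ext rfl ?_
    simp only [dTdt, intP_eq, derivP_eq (K := K), Prod.snd_neg, Prod.fst_neg,
      map_neg, map_sub, int_derivL, ← mapRange_intL, evalP_mapRange,
      hp0, Finsupp.single_zero, map_zero, sub_zero]
    rw [h1]
    abel
  · intro y
    rw [hpi]
    refine Prod.ext rfl ?_
    simp [iotaMap, intP_eq, intL_single, evalP_single]
  · rintro ⟨l, p, q⟩ hx
    obtain ⟨h0, h1⟩ := mem_Hsub_iff χ _ hx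
    simp only at h0 h1
    have hp0 : p 0 = 0 := by rw [← eval_zeroP (K := K)]; exact h0
    rw [hpi, hq1H, hK, hK, hq1H]
    refine Prod.ext ?_ (Prod.ext ?_ ?_)
    · simp [iotaMap]
    · simp only [iotaMap, dTdt, intP_eq, derivP_eq (K := K), Prod.snd_neg, Prod.fst_neg,
        Prod.fst_add, Prod.snd_add, map_neg, map_sub, map_zero,
        int_derivL, ← mapRange_intL, evalP_mapRange, hp0, Finsupp.single_zero, sub_zero,
        deriv_intL, derivL_single, mapRangeL_single]
      rw [h1]
      simp only [Finsupp.single_sub, Finsupp.single_add, Finsupp.single_neg, map_sub, map_neg]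
      abel
    · simp only [iotaMap, dTdt, intP_eq, derivP_eq (K := K), Prod.snd_neg, Prod.fst_neg,
        Prod.fst_add, Prod.snd_add, map_neg, map_sub, map_zero,
        int_derivL, ← mapRange_intL, evalP_mapRange, hp0, Finsupp.single_zero, sub_zero,
        deriv_intL, derivL_single, mapRangeL_single, one_smul, Nat.sub_self]
      abel
end

section
/- Let (M, ∂, [,]) be a DGLA and define odd Koszul brackets {m}₁ = 0 and, for n ≥ 2, {m₁,…,mₙ}ₙ = (1/n!)Σ_{σ∈Sₙ} ε(σ)(−1)^σ [⋯[[∂m_{σ(1)}, m_{σ(2)}], m_{σ(3)}],⋯, m_{σ(n)}]. Then for homogeneous m₁, m₂, m₃ of degrees i₁, i₂, i₃: {{m₁,m₂}₂, m₃}₂ + (−1)^{i₁i₂+i₁i₃}{{m₂,m₃}₂, m₁}₂ + (−1)^{i₂i₃+i₁i₃}{{m₃,m₁}₂, m₂}₂ = (3/2)·∂{m₁,m₂,m₃}₃. -/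
/-- in a DGLA `(M,∂,[,])` over a field of characteristic zero, the
odd Koszul brackets `{m₁,m₂}₂ = ½([∂m₁,m₂] − (−1)^{i₁i₂}[∂m₂,m₁])` and
`{m₁,m₂,m₃}₃ = (1/6)Σ_{σ∈S₃} ε(σ)(−1)^σ [[∂m_{σ(1)},m_{σ(2)}],m_{σ(3)}]`
(written out termwise, with Koszul signs `ε(σ)` for the degrees `i₁,i₂,i₃`)
satisfy, for homogeneous `m₁,m₂,m₃` of degrees `i₁,i₂,i₃`:
`{{m₁,m₂}₂,m₃}₂ + (−1)^{i₁i₂+i₁i₃}{{m₂,m₃}₂,m₁}₂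
  + (−1)^{i₂i₃+i₁i₃}{{m₃,m₁}₂,m₂}₂ = (3/2)·∂{m₁,m₂,m₃}₃`. -/
theorem odd_koszul_bracket_jacobi
    (K : Type) [Field K] [CharZero K] (M : DGLA K)
    (br2 : ℤ → ℤ → M.V → M.V → M.V)
    (hbr2 : ∀ (i j : ℤ) (x y : M.V), br2 i j x y =
      (2⁻¹ : K) • (M.bracket (M.d x) y - ((-1 : K) ^ (i * j)) • M.bracket (M.d y) x))
    (br3 : ℤ → ℤ → ℤ → M.V → M.V → M.V → M.V)
    (hbr3 : ∀ (i1 i2 i3 : ℤ) (x y z : M.V), br3 i1 i2 i3 x y z =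
      ((6 : K)⁻¹) •
        (M.bracket (M.bracket (M.d x) y) z
          - ((-1 : K) ^ (i1 * i2)) • M.bracket (M.bracket (M.d y) x) z
          - ((-1 : K) ^ (i2 * i3)) • M.bracket (M.bracket (M.d x) z) y
          - ((-1 : K) ^ (i1 * i2 + i1 * i3 + i2 * i3)) •
              M.bracket (M.bracket (M.d z) y) x
          + ((-1 : K) ^ (i1 * i2 + i1 * i3)) • M.bracket (M.bracket (M.d y) z) x
          + ((-1 : K) ^ (i1 * i3 + i2 * i3)) • M.bracket (M.bracket (M.d z) x) y)) :
    ∀ (i1 i2 i3 : ℤ) (m1 m2 m3 : M.V),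
      m1 ∈ M.grading i1 → m2 ∈ M.grading i2 → m3 ∈ M.grading i3 →
      br2 (i1 + i2 + 1) i3 (br2 i1 i2 m1 m2) m3 +
          ((-1 : K) ^ (i1 * i2 + i1 * i3)) •
            br2 (i2 + i3 + 1) i1 (br2 i2 i3 m2 m3) m1 +
          ((-1 : K) ^ (i2 * i3 + i1 * i3)) •
            br2 (i3 + i1 + 1) i2 (br2 i3 i1 m3 m1) m2 =
        ((3 : K) / 2) • M.d (br3 i1 i2 i3 m1 m2 m3) := by
  intro i1 i2 i3 m1 m2 m3 h1 h2 h3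
  have ha := M.d_mem i1 m1 h1
  have hb := M.d_mem i2 m2 h2
  have hc := M.d_mem i3 m3 h3
  have h12 := M.bracket_mem (i1+1) i2 _ _ ha h2
  have h21 := M.bracket_mem (i2+1) i1 _ _ hb h1
  have h13 := M.bracket_mem (i1+1) i3 _ _ ha h3
  have h31 := M.bracket_mem (i3+1) i1 _ _ hc h1
  have h23 := M.bracket_mem (i2+1) i3 _ _ hb h3
  have h32 := M.bracket_mem (i3+1) i2 _ _ hc h2
  -- swap of two differentials
  have hba : M.bracket (M.d m2) (M.d m1)
      = -(((-1:K)^((i2+1)*(i1+1))) • M.bracket (M.d m1) (M.d m2)) :=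
    M.antisymm (i2+1) (i1+1) _ _ hb ha
  have hca : M.bracket (M.d m3) (M.d m1)
      = -(((-1:K)^((i3+1)*(i1+1))) • M.bracket (M.d m1) (M.d m3)) :=
    M.antisymm (i3+1) (i1+1) _ _ hc ha
  have hcb : M.bracket (M.d m3) (M.d m2)
      = -(((-1:K)^((i3+1)*(i2+1))) • M.bracket (M.d m2) (M.d m3)) :=
    M.antisymm (i3+1) (i2+1) _ _ hc hb
  -- Leibniz on [dm_u, m_v]
  have hd12 : M.d (M.bracket (M.d m1) m2)
      = ((-1:K)^(i1+1)) • M.bracket (M.d m1) (M.d m2) := by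
    rw [M.leibniz (i1+1) (M.d m1) m2 ha]; simp [M.d_sq m1]
  have hd21 : M.d (M.bracket (M.d m2) m1)
      = ((-1:K)^(i2+1)) • M.bracket (M.d m2) (M.d m1) := by
    rw [M.leibniz (i2+1) (M.d m2) m1 hb]; simp [M.d_sq m2]
  have hd13 : M.d (M.bracket (M.d m1) m3)
      = ((-1:K)^(i1+1)) • M.bracket (M.d m1) (M.d m3) := by
    rw [M.leibniz (i1+1) (M.d m1) m3 ha]; simp [M.d_sq m1]
  have hd31 : M.d (M.bracket (M.d m3) m1)
      = ((-1:K)^(i3+1)) • M.bracket (M.d m3) (M.d m1) := by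
    rw [M.leibniz (i3+1) (M.d m3) m1 hc]; simp [M.d_sq m3]
  have hd23 : M.d (M.bracket (M.d m2) m3)
      = ((-1:K)^(i2+1)) • M.bracket (M.d m2) (M.d m3) := by
    rw [M.leibniz (i2+1) (M.d m2) m3 hb]; simp [M.d_sq m2]
  have hd32 : M.d (M.bracket (M.d m3) m2)
      = ((-1:K)^(i3+1)) • M.bracket (M.d m3) (M.d m2) := by
    rw [M.leibniz (i3+1) (M.d m3) m2 hc]; simp [M.d_sq m3]
  -- antisymmetry turning [dm_w, [dm_u, m_v]] into canonical form
  have hw312 : M.bracket (M.d m3) (M.bracket (M.d m1) m2)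
      = -(((-1:K)^((i3+1)*((i1+1)+i2))) • M.bracket (M.bracket (M.d m1) m2) (M.d m3)) :=
    M.antisymm (i3+1) ((i1+1)+i2) _ _ hc h12
  have hw321 : M.bracket (M.d m3) (M.bracket (M.d m2) m1)
      = -(((-1:K)^((i3+1)*((i2+1)+i1))) • M.bracket (M.bracket (M.d m2) m1) (M.d m3)) :=
    M.antisymm (i3+1) ((i2+1)+i1) _ _ hc h21
  have hw123 : M.bracket (M.d m1) (M.bracket (M.d m2) m3)
      = -(((-1:K)^((i1+1)*((i2+1)+i3))) • M.bracket (M.bracket (M.d m2) m3) (M.d m1)) :=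
    M.antisymm (i1+1) ((i2+1)+i3) _ _ ha h23
  have hw132 : M.bracket (M.d m1) (M.bracket (M.d m3) m2)
      = -(((-1:K)^((i1+1)*((i3+1)+i2))) • M.bracket (M.bracket (M.d m3) m2) (M.d m1)) :=
    M.antisymm (i1+1) ((i3+1)+i2) _ _ ha h32
  have hw231 : M.bracket (M.d m2) (M.bracket (M.d m3) m1)
      = -(((-1:K)^((i2+1)*((i3+1)+i1))) • M.bracket (M.bracket (M.d m3) m1) (M.d m2)) :=
    M.antisymm (i2+1) ((i3+1)+i1) _ _ hb h31
  have hw213 : M.bracket (M.d m2) (M.bracket (M.d m1) m3)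
      = -(((-1:K)^((i2+1)*((i1+1)+i3))) • M.bracket (M.bracket (M.d m1) m3) (M.d m2)) :=
    M.antisymm (i2+1) ((i1+1)+i3) _ _ hb h13
  have hD123 : M.d (M.bracket (M.bracket (M.d m1) m2) m3)
      = ((-1:K)^(i1+1)) • M.bracket (M.bracket (M.d m1) (M.d m2)) m3
        + ((-1:K)^((i1+1)+i2)) • M.bracket (M.bracket (M.d m1) m2) (M.d m3) := by
    rw [M.leibniz ((i1+1)+i2) _ m3 h12, hd12]
    simp only [map_smul, LinearMap.smul_apply]
  have hD213 : M.d (M.bracket (M.bracket (M.d m2) m1) m3)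
      = ((-1:K)^(i2+1)) • M.bracket (M.bracket (M.d m2) (M.d m1)) m3
        + ((-1:K)^((i2+1)+i1)) • M.bracket (M.bracket (M.d m2) m1) (M.d m3) := by
    rw [M.leibniz ((i2+1)+i1) _ m3 h21, hd21]
    simp only [map_smul, LinearMap.smul_apply]
  have hD132 : M.d (M.bracket (M.bracket (M.d m1) m3) m2)
      = ((-1:K)^(i1+1)) • M.bracket (M.bracket (M.d m1) (M.d m3)) m2
        + ((-1:K)^((i1+1)+i3)) • M.bracket (M.bracket (M.d m1) m3) (M.d m2) := by
    rw [M.leibniz ((i1+1)+i3) _ m2 h13, hd13]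
    simp only [map_smul, LinearMap.smul_apply]
  have hD321 : M.d (M.bracket (M.bracket (M.d m3) m2) m1)
      = ((-1:K)^(i3+1)) • M.bracket (M.bracket (M.d m3) (M.d m2)) m1
        + ((-1:K)^((i3+1)+i2)) • M.bracket (M.bracket (M.d m3) m2) (M.d m1) := by
    rw [M.leibniz ((i3+1)+i2) _ m1 h32, hd32]
    simp only [map_smul, LinearMap.smul_apply]
  have hD231 : M.d (M.bracket (M.bracket (M.d m2) m3) m1)
      = ((-1:K)^(i2+1)) • M.bracket (M.bracket (M.d m2) (M.d m3)) m1
        + ((-1:K)^((i2+1)+i3)) • M.bracket (M.bracket (M.d m2) m3) (M.d m1) := by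
    rw [M.leibniz ((i2+1)+i3) _ m1 h23, hd23]
    simp only [map_smul, LinearMap.smul_apply]
  have hD312 : M.d (M.bracket (M.bracket (M.d m3) m1) m2)
      = ((-1:K)^(i3+1)) • M.bracket (M.bracket (M.d m3) (M.d m1)) m2
        + ((-1:K)^((i3+1)+i1)) • M.bracket (M.bracket (M.d m3) m1) (M.d m2) := by
    rw [M.leibniz ((i3+1)+i1) _ m2 h31, hd31]
    simp only [map_smul, LinearMap.smul_apply]
  simp only [hbr2, hbr3]
  simp only [map_sub, map_add, map_smul, map_neg, LinearMap.sub_apply, LinearMap.add_apply,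
    LinearMap.smul_apply, LinearMap.neg_apply, smul_sub, smul_add, smul_neg, smul_smul]
  simp only [hd12, hd21, hd13, hd31, hd23, hd32, hw312, hw321, hw123, hw132, hw231, hw213,
    hD123, hD213, hD132, hD321, hD231, hD312]
  simp only [hba, hca, hcb]
  simp only [map_sub, map_add, map_smul, map_neg, LinearMap.sub_apply, LinearMap.add_apply,
    LinearMap.smul_apply, LinearMap.neg_apply, smul_sub, smul_add, smul_neg, smul_smul]
  have key : ∀ n : ℤ, (-1:K)^n = if Even n then 1 else -1 := by
    intro n
    rcases Int.even_or_odd n with h | h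
    · simp [h.neg_one_zpow, h]
    · simp [h.neg_one_zpow, Int.not_even_iff_odd.2 h]
  simp only [key]
  have hone : ¬ Even (1:ℤ) := by decide
  rcases Int.even_or_odd i1 with hp1 | hp1 <;>
    rcases Int.even_or_odd i2 with hp2 | hp2 <;>
      rcases Int.even_or_odd i3 with hp3 | hp3 <;>
    (first
      | have e1 : Even i1 := hp1
      | have e1 : ¬ Even i1 := Int.not_even_iff_odd.2 hp1) <;>
    (first
      | have e2 : Even i2 := hp2
      | have e2 : ¬ Even i2 := Int.not_even_iff_odd.2 hp2) <;>
    (first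
      | have e3 : Even i3 := hp3
      | have e3 : ¬ Even i3 := Int.not_even_iff_odd.2 hp3) <;>
  · simp only [Int.even_add, Int.even_mul, e1, e2, e3, hone, iff_true, iff_false,
      true_or, or_true, false_or, or_false, not_true, not_false_iff, not_not,
      true_iff, false_iff, if_true, if_false, ite_true, ite_false, not_false_eq_true]
    module
end
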